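/- arXiv:1005.5632 — 4 statements merged into one kernel-verified Lean document; each statement's English description precedes it below -/
import Mathlib

section
/- Let W be uniformly convex with constant C_W and with |∇W(x)| ≤ P(|x|) for a polynomial P. There exists a constant C_Π > 0 such that for every probability measure μ (such that W*μ is finite everywhere with ∇²(W*μ) ≥ C_W·Id and center c_μ exists) and every R > 0, the Gibbs measure Π(μ)(dx) = Z(μ)⁻¹ e^{−W*μ(x)} dx satisfies Π(μ)({x : |x − c_μ| ≥ R}) ≤ C_Π e^{−C_W R}. -/
open MeasureTheory Real Module
open scoped ENNReal

/-!
Integrating the lower bound on second directional derivatives twice along the ray from the critical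
point `c` gives `g x ≥ g ((x + c) / 2) + C ‖x - c‖² / 4`. On `{R ≤ ‖x - c‖}` the density `e^{-g}` is
therefore at most `e^{-C R² / 4} e^{-g ((x + c) / 2)}`, and the substitution `x ↦ (x + c) / 2`, of
Jacobian `2^d`, bounds the tail mass by `2^d e^{-C R² / 4} Z`; finally `R² / 4 ≥ R - 1`.
Differentiability of `g` away from `c` comes for free, since `fderiv` vanishes at non-differentiable
points while the second-derivative bound is positive.
-/

section Convexity

variable {E : Type*} [NormedAddCommGroup E] [NormedSpace ℝ E]

lemma differentiableAt_of_fderiv_apply_ne_zero {f : E → ℝ} {x v : E}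
    (h : fderiv ℝ f x v ≠ 0) : DifferentiableAt ℝ f x := by
  contrapose! h
  simp [fderiv_zero_of_not_differentiableAt h]

lemma hasDerivAt_add_smul (c w : E) (t : ℝ) : HasDerivAt (fun s : ℝ => c + s • w) w t := by
  simpa using ((hasDerivAt_id t).smul_const w).const_add c

variable {g : E → ℝ} {c : E}

lemma mul_le_fderiv_apply_add_smul {w : E} {m : ℝ} (hm : 0 < m)
    (hconv : ∀ x, m ≤ fderiv ℝ (fun z => fderiv ℝ g z w) x w) (hc : fderiv ℝ g c = 0)
    {t : ℝ} (ht : 0 ≤ t) : m * t ≤ fderiv ℝ g (c + t • w) w := by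
  have hφ : ∀ s : ℝ, HasDerivAt (fun s => fderiv ℝ g (c + s • w) w)
      (fderiv ℝ (fun z => fderiv ℝ g z w) (c + s • w) w) s := fun s =>
    (differentiableAt_of_fderiv_apply_ne_zero (hm.trans_le (hconv _)).ne').hasFDerivAt
      |>.comp_hasDerivAt s (hasDerivAt_add_smul c w s)
  simpa [hc] using convex_univ.mul_sub_le_image_sub_of_le_deriv
    (fun s _ => (hφ s).continuousAt.continuousWithinAt)
    (fun s _ => (hφ s).differentiableAt.differentiableWithinAt)
    (fun s _ => (hφ s).deriv ▸ hconv _) 0 trivial t trivial ht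

variable {C : ℝ}

lemma apply_add_add_le_apply_add_two_smul (hC : 0 < C)
    (hconv : ∀ x v, C * ‖v‖ ^ 2 ≤ fderiv ℝ (fun z => fderiv ℝ g z v) x v)
    (hc : fderiv ℝ g c = 0) (w : E) :
    g (c + w) + C * ‖w‖ ^ 2 ≤ g (c + (2 : ℝ) • w) := by
  rcases eq_or_ne w 0 with rfl | hw
  · simp
  have hm : 0 < C * ‖w‖ ^ 2 := by positivity
  have hφ := fun t (ht : 0 ≤ t) => mul_le_fderiv_apply_add_smul hm (hconv · w) hc ht
  have hψ : ∀ t : ℝ, 0 < t →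
      HasDerivAt (fun s => g (c + s • w)) (fderiv ℝ g (c + t • w) w) t := fun t ht =>
    (differentiableAt_of_fderiv_apply_ne_zero
      ((mul_pos hm ht).trans_le (hφ t ht.le)).ne').hasFDerivAt.comp_hasDerivAt t
      (hasDerivAt_add_smul c w t)
  have hincr := (convex_Icc (1 : ℝ) 2).mul_sub_le_image_sub_of_le_deriv (C := C * ‖w‖ ^ 2)
    (fun t ht => (hψ t (by linarith [ht.1])).continuousAt.continuousWithinAt)
    (fun t ht => (hψ t (by linarith [(interior_subset ht : t ∈ _).1])).differentiableAt
      |>.differentiableWithinAt)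
    (fun t ht => by
      have ht1 : 1 ≤ t := (interior_subset ht : t ∈ Set.Icc (1 : ℝ) 2).1
      rw [(hψ t (by linarith)).deriv]
      nlinarith [hφ t (by linarith)])
    1 (by norm_num) 2 (by norm_num) (by norm_num)
  simp only [one_smul] at hincr
  linarith

lemma apply_half_smul_add_add_le (hC : 0 < C)
    (hconv : ∀ x v, C * ‖v‖ ^ 2 ≤ fderiv ℝ (fun z => fderiv ℝ g z v) x v)
    (hc : fderiv ℝ g c = 0) (x : E) :
    g ((2⁻¹ : ℝ) • (x + c)) + C / 4 * ‖x - c‖ ^ 2 ≤ g x := by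
  have h := apply_add_add_le_apply_add_two_smul hC hconv hc ((2⁻¹ : ℝ) • (x - c))
  have hnorm : ‖(2⁻¹ : ℝ) • (x - c)‖ ^ 2 = ‖x - c‖ ^ 2 / 4 := by
    rw [norm_smul]; norm_num; ring
  rw [hnorm, show c + (2⁻¹ : ℝ) • (x - c) = (2⁻¹ : ℝ) • (x + c) by module,
    show c + (2 : ℝ) • (2⁻¹ : ℝ) • (x - c) = x by module] at h
  linarith

end Convexity

section Gibbs

variable {E : Type*} [NormedAddCommGroup E] [NormedSpace ℝ E] [FiniteDimensional ℝ E]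
  [MeasurableSpace E] [BorelSpace E] (μ : Measure E) [μ.IsAddHaarMeasure]

lemma lintegral_comp_half_smul_add (F : E → ℝ≥0∞) (c : E) :
    ∫⁻ x, F ((2⁻¹ : ℝ) • (x + c)) ∂μ = 2 ^ finrank ℝ E * ∫⁻ x, F x ∂μ := by
  have hmap := lintegral_map_equiv (μ := μ) F (MeasurableEquiv.smul₀ (2⁻¹ : ℝ) (by norm_num))
  rw [MeasurableEquiv.coe_smul₀, Measure.map_addHaar_smul μ (by norm_num)] at hmap
  rw [lintegral_add_right_eq_self (fun x => F ((2⁻¹ : ℝ) • x)) c, ← hmap, lintegral_smul_measure]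
  simp

variable {g : E → ℝ} {C : ℝ} {c : E}

lemma setLIntegral_exp_neg_le (hC : 0 < C)
    (hconv : ∀ x v, C * ‖v‖ ^ 2 ≤ fderiv ℝ (fun z => fderiv ℝ g z v) x v)
    (hc : fderiv ℝ g c = 0) {R : ℝ} (hR : 0 ≤ R) :
    ∫⁻ x in {x | R ≤ ‖x - c‖}, ENNReal.ofReal (exp (-g x)) ∂μ
      ≤ ENNReal.ofReal (exp (-(C / 4 * R ^ 2))) * 2 ^ finrank ℝ E
        * ∫⁻ x, ENNReal.ofReal (exp (-g x)) ∂μ := by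
  set K := ENNReal.ofReal (exp (-(C / 4 * R ^ 2)))
  have hS : MeasurableSet {x : E | R ≤ ‖x - c‖} :=
    measurableSet_le measurable_const (by fun_prop)
  have hpoint : ∀ x, {x | R ≤ ‖x - c‖}.indicator (fun x => ENNReal.ofReal (exp (-g x))) x
      ≤ K * ENNReal.ofReal (exp (-g ((2⁻¹ : ℝ) • (x + c)))) := by
    intro x
    by_cases hx : R ≤ ‖x - c‖
    · rw [Set.indicator_of_mem (show x ∈ {x | R ≤ ‖x - c‖} from hx),
        ← ENNReal.ofReal_mul (exp_pos _).le, ← exp_add]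
      gcongr
      have hR2 : R ^ 2 ≤ ‖x - c‖ ^ 2 := pow_le_pow_left₀ hR hx 2
      nlinarith [apply_half_smul_add_add_le hC hconv hc x]
    · rw [Set.indicator_of_notMem (show x ∉ {x | R ≤ ‖x - c‖} from hx)]
      exact zero_le
  calc ∫⁻ x in {x | R ≤ ‖x - c‖}, ENNReal.ofReal (exp (-g x)) ∂μ
      ≤ ∫⁻ x, K * ENNReal.ofReal (exp (-g ((2⁻¹ : ℝ) • (x + c)))) ∂μ := by
        rw [← lintegral_indicator hS]
        exact lintegral_mono hpoint
    _ = K * 2 ^ finrank ℝ E * ∫⁻ x, ENNReal.ofReal (exp (-g x)) ∂μ := by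
        rw [lintegral_const_mul' _ _ ENNReal.ofReal_ne_top,
          lintegral_comp_half_smul_add μ (fun x => ENNReal.ofReal (exp (-g x))), mul_assoc]

theorem withDensity_exp_neg_div_integral_tail_le (hC : 0 < C)
    (hconv : ∀ x v, C * ‖v‖ ^ 2 ≤ fderiv ℝ (fun z => fderiv ℝ g z v) x v)
    (hc : fderiv ℝ g c = 0) (hint : Integrable (fun x => exp (-g x)) μ) {R : ℝ} (hR : 0 ≤ R) :
    μ.withDensity (fun x => ENNReal.ofReal (exp (-g x) / ∫ x, exp (-g x) ∂μ))
        {x | R ≤ ‖x - c‖}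
      ≤ ENNReal.ofReal (2 ^ finrank ℝ E * exp C * exp (-C * R)) := by
  set Z := ∫ x, exp (-g x) ∂μ
  have hZ : 0 < Z := integral_exp_pos hint
  have hZlint : ∫⁻ x, ENNReal.ofReal (exp (-g x)) ∂μ = ENNReal.ofReal Z :=
    (ofReal_integral_eq_lintegral_ofReal hint (ae_of_all _ fun x => (exp_pos _).le)).symm
  have hgauss : exp (-(C / 4 * R ^ 2)) ≤ exp C * exp (-C * R) := by
    rw [← exp_add]
    gcongr
    nlinarith [mul_nonneg hC.le (sq_nonneg (R / 2 - 1))]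
  rw [withDensity_apply _ (measurableSet_le measurable_const (by fun_prop))]
  simp_rw [ENNReal.ofReal_div_of_pos hZ, div_eq_mul_inv]
  rw [lintegral_mul_const' _ _ (ENNReal.inv_ne_top.mpr (ENNReal.ofReal_pos.mpr hZ).ne')]
  calc (∫⁻ x in {x | R ≤ ‖x - c‖}, ENNReal.ofReal (exp (-g x)) ∂μ) * (ENNReal.ofReal Z)⁻¹
      ≤ ENNReal.ofReal (exp (-(C / 4 * R ^ 2))) * 2 ^ finrank ℝ E * ENNReal.ofReal Z
          * (ENNReal.ofReal Z)⁻¹ := by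
        gcongr
        exact hZlint ▸ setLIntegral_exp_neg_le μ hC hconv hc hR
    _ = ENNReal.ofReal (exp (-(C / 4 * R ^ 2)) * 2 ^ finrank ℝ E) := by
        rw [mul_assoc, ENNReal.mul_inv_cancel (ENNReal.ofReal_pos.mpr hZ).ne' ENNReal.ofReal_ne_top,
          mul_one, ENNReal.ofReal_mul (exp_pos _).le, ENNReal.ofReal_pow zero_le_two,
          ENNReal.ofReal_ofNat]
    _ ≤ ENNReal.ofReal (2 ^ finrank ℝ E * exp C * exp (-C * R)) := by
        rw [mul_comm, mul_assoc]
        gcongr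

end Gibbs

theorem stmt4_general (d : ℕ) (CW : ℝ) (hCW : 0 < CW)
    (W : EuclideanSpace ℝ (Fin d) → ℝ) :
    ∃ Cpi > (0:ℝ), ∀ μ : Measure (EuclideanSpace ℝ (Fin d)), IsProbabilityMeasure μ →
      ∀ g : EuclideanSpace ℝ (Fin d) → ℝ,
      (∀ x, g x = ∫ y, W (x - y) ∂μ) →
      (∀ x, Integrable (fun y => W (x - y)) μ) →
      (∀ x v : EuclideanSpace ℝ (Fin d),
        CW * ‖v‖ ^ 2 ≤ fderiv ℝ (fun z => fderiv ℝ g z v) x v) →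
      Integrable (fun x => Real.exp (-g x)) →
      ∀ c : EuclideanSpace ℝ (Fin d), gradient g c = 0 →
      ∀ Z : ℝ, Z = ∫ x, Real.exp (-g x) →
      ∀ R > (0:ℝ),
        (volume.withDensity (fun x => ENNReal.ofReal (Real.exp (-g x) / Z)))
            {x | R ≤ ‖x - c‖} ≤ ENNReal.ofReal (Cpi * Real.exp (-CW * R)) := by
  refine ⟨2 ^ d * exp CW, by positivity, fun μ _ g _ _ hconv hint c hc Z hZ R hR => ?_⟩
  have hc' : fderiv ℝ g c = 0 := by rw [← toDual_gradient, hc, map_zero]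
  subst hZ
  simpa [finrank_euclideanSpace_fin] using
    withDensity_exp_neg_div_integral_tail_le volume hCW hconv hc' hint hR.le

/-- Exponential tail estimate for the Gibbs measure `Π(μ) ∝ e^{−W*μ}` around
the center `c_μ` of `μ`: `Π(μ)({|x − c_μ| ≥ R}) ≤ C_Π e^{−C_W R}`. -/
theorem stmt4 (d : ℕ) (CW : ℝ) (hCW : 0 < CW) (P : ℝ → ℝ)
    (W : EuclideanSpace ℝ (Fin d) → ℝ) (hW : ContDiff ℝ 2 W)
    (hWconv : ∀ x v : EuclideanSpace ℝ (Fin d),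
      CW * ‖v‖ ^ 2 ≤ fderiv ℝ (fun z => fderiv ℝ W z v) x v)
    (hWgrad : ∀ x : EuclideanSpace ℝ (Fin d), ‖gradient W x‖ ≤ P ‖x‖) :
    ∃ Cpi > (0:ℝ), ∀ μ : Measure (EuclideanSpace ℝ (Fin d)), IsProbabilityMeasure μ →
      ∀ g : EuclideanSpace ℝ (Fin d) → ℝ,
      (∀ x, g x = ∫ y, W (x - y) ∂μ) →
      (∀ x, Integrable (fun y => W (x - y)) μ) →
      (∀ x v : EuclideanSpace ℝ (Fin d),
        CW * ‖v‖ ^ 2 ≤ fderiv ℝ (fun z => fderiv ℝ g z v) x v) →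
      Integrable (fun x => Real.exp (-g x)) →
      ∀ c : EuclideanSpace ℝ (Fin d), gradient g c = 0 →
      ∀ Z : ℝ, Z = ∫ x, Real.exp (-g x) →
      ∀ R > (0:ℝ),
        (volume.withDensity (fun x => ENNReal.ofReal (Real.exp (-g x) / Z)))
            {x | R ≤ ‖x - c‖} ≤ ENNReal.ofReal (Cpi * Real.exp (-CW * R)) :=
  stmt4_general d CW hCW W
end

section
/- Let W be C² and uniformly convex with constant C_W > 0, let μ_t be the empirical occupation measure of a process X, and on [T_n, T_{n+1}] let X and Y solve dX_t = √2 dB_t − ∇(W*μ_t)(X_t) dt and dY_t = √2 dB_t − ∇(W*μ_{T_n})(Y_t) dt driven by the same Brownian motion. Assume that the 'measure-drift difference' D_t = −∇(W*(μ_t − μ_{T_n}))(X_t) satisfies |D_t| ≤ P(2L_n)·ΔT_n/T_n for all t in the interval. Then for all t ∈ [T_n, T_{n+1}]: |X_t − Y_t| ≤ e^{−C_W(t−T_n)} |X_{T_n} − Y_{T_n}| + (ΔT_n/(T_n C_W)) P(2L_n). -/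
/-!
The difference `Z = X - Y` is `C¹` with `Z' = -D - (∇g_{T_n}(X) - ∇g_{T_n}(Y))`, where
`D = ∇g_t(X) - ∇g_{T_n}(X)`. Uniform convexity makes `∇g_{T_n}` strongly monotone, so
`⟪Z, Z'⟫ ≤ ε‖Z‖ - C_W‖Z‖²` with `ε` the bound on `‖D‖`. This differential inequality is compared
with the solution `B` of `B' = -C_W (B - ε/C_W - δ)`: at a first contact `‖Z‖ = B > 0` the
derivative of `‖Z‖²` is strictly below that of `B²`, so `‖Z‖ ≤ B` throughout; then let `δ → 0`.
-/

open MeasureTheory Real Set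
open scoped InnerProductSpace

section

variable {E : Type*} [NormedAddCommGroup E] [InnerProductSpace ℝ E]

theorem inner_gradient_eq_fderiv [CompleteSpace E] (g : E → ℝ) (x v : E) :
    ⟪gradient g x, v⟫_ℝ = fderiv ℝ g x v := by
  rw [← InnerProductSpace.toDual_apply_apply, toDual_gradient]

theorem mul_norm_sub_sq_le_inner_gradient_sub [CompleteSpace E] {c : ℝ} (hc : 0 < c)
    {g : E → ℝ} (hg : ∀ x v : E, c * ‖v‖ ^ 2 ≤ fderiv ℝ (fun z => fderiv ℝ g z v) x v)
    (a b : E) :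
    c * ‖b - a‖ ^ 2 ≤ ⟪gradient g b - gradient g a, b - a⟫_ℝ := by
  set v := b - a
  rcases eq_or_ne v 0 with hv | hv
  · simp [hv]
  have hcv : 0 < c * ‖v‖ ^ 2 := by have := norm_pos_iff.2 hv; positivity
  set F : E → ℝ := fun z => fderiv ℝ g z v
  -- `fderiv` of a non-differentiable function is `0`, which the convexity bound rules out.
  have hF : ∀ x, DifferentiableAt ℝ F x := by
    intro x
    by_contra h
    have := hg x v
    rw [fderiv_zero_of_not_differentiableAt h] at this
    exact hcv.not_ge this
  have hline : ∀ s : ℝ, HasDerivAt (fun s : ℝ => F (a + s • v)) (fderiv ℝ F (a + s • v) v) s :=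
    fun s => (hF _).hasFDerivAt.comp_hasDerivAt s
      (by simpa using ((hasDerivAt_id s).smul_const v).const_add a)
  have hgrowth := mul_sub_le_image_sub_of_le_deriv (fun s => (hline s).differentiableAt)
    (fun s => (hline s).deriv ▸ hg _ v) zero_le_one
  have hav : a + v = b := add_sub_cancel a b
  simp only [sub_zero, mul_one, zero_smul, add_zero, one_smul, hav] at hgrowth
  rwa [inner_sub_left, inner_gradient_eq_fderiv, inner_gradient_eq_fderiv]

theorem inner_sub_neg_sub_le {c : ℝ} {G : E → E}
    (hG : ∀ a b, c * ‖b - a‖ ^ 2 ≤ ⟪G b - G a, b - a⟫_ℝ) (u x y : E) :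
    ⟪x - y, -(u - G y)⟫_ℝ ≤ ‖u - G x‖ * ‖x - y‖ - c * ‖x - y‖ ^ 2 := by
  have hsplit : -(u - G y) = -(u - G x) - (G x - G y) := by abel
  have hcs : -⟪u - G x, x - y⟫_ℝ ≤ ‖u - G x‖ * ‖x - y‖ :=
    (neg_le_abs _).trans (abs_real_inner_le_norm _ _)
  rw [hsplit, real_inner_comm, inner_sub_left, inner_neg_left]
  linarith [hG y x]

variable {f f' : ℝ → E} {a b c ε : ℝ}

theorem norm_le_exp_mul_add_add_of_inner_deriv_le {δ : ℝ} (hc : 0 < c) (hε : 0 ≤ ε)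
    (hδ : 0 < δ) (hf : ∀ t ∈ Icc a b, HasDerivAt f (f' t) t)
    (hinner : ∀ t ∈ Icc a b, ⟪f t, f' t⟫_ℝ ≤ ε * ‖f t‖ - c * ‖f t‖ ^ 2) :
    ∀ t ∈ Icc a b, ‖f t‖ ≤ exp (-c * (t - a)) * ‖f a‖ + (ε / c + δ) := by
  set B : ℝ → ℝ := fun t => exp (-c * (t - a)) * ‖f a‖ + (ε / c + δ)
  have hBpos : ∀ t, 0 < B t := fun t => by positivity
  have hB : ∀ t, HasDerivAt B (-c * (B t - (ε / c + δ))) t := by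
    intro t
    have hlin : HasDerivAt (fun t : ℝ => -c * (t - a)) (-c) t := by
      simpa using ((hasDerivAt_id t).sub_const a).const_mul (-c)
    refine ((hlin.exp.mul_const ‖f a‖).add_const (ε / c + δ)).congr_deriv ?_
    simp only [B]
    ring
  have hsq : ∀ t ∈ Icc a b, ‖f t‖ ^ 2 ≤ B t ^ 2 := by
    refine image_le_of_deriv_right_lt_deriv_boundary
      (fun t ht => ((hf t ht).continuousAt.norm.pow 2).continuousWithinAt)
      (fun t ht => (hf t (Ico_subset_Icc_self ht)).norm_sq.hasDerivWithinAt) ?_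
      (fun t => (hB t).pow 2) ?_
    · have : ‖f a‖ ≤ B a := by
        simp only [B, sub_self, mul_zero, exp_zero, one_mul]
        exact le_add_of_nonneg_right (by positivity)
      exact pow_le_pow_left₀ (norm_nonneg _) this 2
    · intro t ht hcontact
      have hft : ‖f t‖ = B t := (sq_eq_sq₀ (norm_nonneg _) (hBpos t).le).1 hcontact
      have h := hinner t (Ico_subset_Icc_self ht)
      rw [hft] at h
      have hB' : 2 * B t ^ (2 - 1) * (-c * (B t - (ε / c + δ))) =
          2 * (ε * B t - c * B t ^ 2) + 2 * (c * δ * B t) := by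
        field_simp
        ring
      rw [Nat.cast_ofNat, hB']
      linarith [mul_pos (mul_pos hc hδ) (hBpos t)]
  exact fun t ht => (sq_le_sq₀ (norm_nonneg _) (hBpos t).le).1 (hsq t ht)

theorem norm_le_exp_mul_add_of_inner_deriv_le (hc : 0 < c) (hε : 0 ≤ ε)
    (hf : ∀ t ∈ Icc a b, HasDerivAt f (f' t) t)
    (hinner : ∀ t ∈ Icc a b, ⟪f t, f' t⟫_ℝ ≤ ε * ‖f t‖ - c * ‖f t‖ ^ 2) :
    ∀ t ∈ Icc a b, ‖f t‖ ≤ exp (-c * (t - a)) * ‖f a‖ + ε / c :=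
  fun t ht => le_of_forall_pos_le_add fun _δ hδ => by
    simpa only [add_assoc] using
      norm_le_exp_mul_add_add_of_inner_deriv_le hc hε hδ hf hinner t ht

end

theorem stmt7_general (d : ℕ) (CW : ℝ) (hCW : 0 < CW)
    (Tn Tn1 : ℝ)
    (g : ℝ → EuclideanSpace ℝ (Fin d) → ℝ)
    (hgconv : ∀ t, ∀ x v : EuclideanSpace ℝ (Fin d),
      CW * ‖v‖ ^ 2 ≤ fderiv ℝ (fun z => fderiv ℝ (g t) z v) x v)
    (X Y : ℝ → EuclideanSpace ℝ (Fin d))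
    (hXY : ∀ t ∈ Set.Icc Tn Tn1,
      HasDerivAt (fun s => X s - Y s)
        (-(gradient (g t) (X t) - gradient (g Tn) (Y t))) t)
    (P2Ln : ℝ)
    (hD : ∀ t ∈ Set.Icc Tn Tn1,
      ‖gradient (g t) (X t) - gradient (g Tn) (X t)‖ ≤ P2Ln * (Tn1 - Tn) / Tn) :
    ∀ t ∈ Set.Icc Tn Tn1,
      ‖X t - Y t‖ ≤ Real.exp (-CW * (t - Tn)) * ‖X Tn - Y Tn‖ +
        (Tn1 - Tn) / (Tn * CW) * P2Ln := by
  intro t ht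
  have hε : 0 ≤ P2Ln * (Tn1 - Tn) / Tn := (norm_nonneg _).trans (hD t ht)
  have hinner : ∀ s ∈ Icc Tn Tn1,
      ⟪X s - Y s, -(gradient (g s) (X s) - gradient (g Tn) (Y s))⟫_ℝ ≤
        P2Ln * (Tn1 - Tn) / Tn * ‖X s - Y s‖ - CW * ‖X s - Y s‖ ^ 2 := fun s hs =>
    (inner_sub_neg_sub_le (mul_norm_sub_sq_le_inner_gradient_sub hCW (hgconv Tn)) _ _ _).trans
      (by gcongr; exact hD s hs)
  convert norm_le_exp_mul_add_of_inner_deriv_le hCW hε hXY hinner t ht using 2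
  ring

/-- Frozen-measure comparison: if `X` and `Y` are driven by the same Brownian
motion, with drifts `−∇(W*μ_t)` and `−∇(W*μ_{T_n})` respectively (so that the
difference `X − Y` is `C¹` with derivative `−(∇(W*μ_t)(X_t) − ∇(W*μ_{T_n})(Y_t))`),
`W` is uniformly convex with constant `C_W`, and the measure-drift difference
satisfies `|∇(W*μ_t)(X_t) − ∇(W*μ_{T_n})(X_t)| ≤ P(2L_n)·ΔT_n/T_n`, then
`|X_t − Y_t| ≤ e^{−C_W(t−T_n)}|X_{T_n} − Y_{T_n}| + (ΔT_n/(T_n C_W)) P(2L_n)`. -/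
theorem stmt7 (d : ℕ) (CW : ℝ) (hCW : 0 < CW)
    (W : EuclideanSpace ℝ (Fin d) → ℝ) (hW : ContDiff ℝ 2 W)
    (hWconv : ∀ x v : EuclideanSpace ℝ (Fin d),
      CW * ‖v‖ ^ 2 ≤ fderiv ℝ (fun z => fderiv ℝ W z v) x v)
    (Tn Tn1 : ℝ) (hTn : 0 < Tn) (hTn1 : Tn < Tn1)
    (μ : ℝ → Measure (EuclideanSpace ℝ (Fin d)))
    (hμ : ∀ t, IsProbabilityMeasure (μ t))
    (g : ℝ → EuclideanSpace ℝ (Fin d) → ℝ)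
    (hg : ∀ t x, g t x = ∫ y, W (x - y) ∂(μ t))
    (hgconv : ∀ t, ∀ x v : EuclideanSpace ℝ (Fin d),
      CW * ‖v‖ ^ 2 ≤ fderiv ℝ (fun z => fderiv ℝ (g t) z v) x v)
    (X Y : ℝ → EuclideanSpace ℝ (Fin d))
    (hXY : ∀ t ∈ Set.Icc Tn Tn1,
      HasDerivAt (fun s => X s - Y s)
        (-(gradient (g t) (X t) - gradient (g Tn) (Y t))) t)
    (P2Ln : ℝ) (hP2Ln : 0 ≤ P2Ln)
    (hD : ∀ t ∈ Set.Icc Tn Tn1,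
      ‖gradient (g t) (X t) - gradient (g Tn) (X t)‖ ≤ P2Ln * (Tn1 - Tn) / Tn) :
    ∀ t ∈ Set.Icc Tn Tn1,
      ‖X t - Y t‖ ≤ Real.exp (-CW * (t - Tn)) * ‖X Tn - Y Tn‖ +
        (Tn1 - Tn) / (Tn * CW) * P2Ln :=
  stmt7_general d CW hCW Tn Tn1 g hgconv X Y hXY P2Ln hD
end

section
/- Let g : [0,∞) → [0,∞) be continuous, increasing, with g(0) = 0, and let (y_j) be a sequence of nonnegative reals and (Δθ_j) positive steps such that y_{j+1} ≤ y_j − (1/2) g(y_j) Δθ_j. Let ỹ solve ỹ' = −(1/2) g(ỹ) with ỹ(θ_0) ≥ y_0, where θ_j = θ_0 + Σ_{k<j} Δθ_k. Then y_j ≤ ỹ(θ_j) for all j. -/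
open Set Real

/-- Discrete-to-continuous comparison lemma: if `y_{j+1} ≤ y_j − (1/2)g(y_j)Δθ_j`
and `ỹ` solves `ỹ' = −(1/2)g(ỹ)` with `ỹ(θ₀) ≥ y₀`, then `y_j ≤ ỹ(θ_j)`. -/
theorem stmt14 (g : ℝ → ℝ) (hgcont : Continuous g)
    (hgmono : StrictMonoOn g (Set.Ici (0:ℝ))) (hg0 : g 0 = 0)
    (hgnonneg : ∀ x : ℝ, 0 ≤ x → 0 ≤ g x)
    (y : ℕ → ℝ) (hy0 : ∀ j, 0 ≤ y j)
    (Δθ : ℕ → ℝ) (hΔθ : ∀ j, 0 < Δθ j)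
    (hstep : ∀ j, y (j + 1) ≤ y j - (1/2) * g (y j) * Δθ j)
    -- step sizes are small enough that `x ↦ x − (g x/2)Δθ_j` is monotone on `[0,∞)`:
    (hsmall : ∀ j, ∀ a b : ℝ, 0 ≤ a → a ≤ b →
      a - g a / 2 * Δθ j ≤ b - g b / 2 * Δθ j)
    (θ₀ : ℝ) (θ : ℕ → ℝ) (hθ0 : θ 0 = θ₀)
    (hθ : ∀ j, θ (j + 1) = θ j + Δθ j)
    (ytil : ℝ → ℝ)
    (hode : ∀ s : ℝ, θ₀ ≤ s → HasDerivAt ytil (-(1/2) * g (ytil s)) s)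
    (hytilnonneg : ∀ s : ℝ, θ₀ ≤ s → 0 ≤ ytil s)
    (hinit : y 0 ≤ ytil θ₀) :
    ∀ j, y j ≤ ytil (θ j) := by
  have hθge : ∀ j, θ₀ ≤ θ j := by
    intro j
    induction j with
    | zero => rw [hθ0]
    | succ n ih => rw [hθ n]; linarith [(hΔθ n).le]
  have hanti : AntitoneOn ytil (Set.Ici θ₀) := by
    apply antitoneOn_of_deriv_nonpos (convex_Ici θ₀)
    · exact fun s hs => (hode s hs).continuousAt.continuousWithinAt
    · intro s hs
      rw [interior_Ici] at hs
      exact (hode s hs.le).differentiableAt.differentiableWithinAt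
    · intro s hs
      rw [interior_Ici] at hs
      rw [(hode s hs.le).deriv]
      have := hgnonneg _ (hytilnonneg s hs.le)
      linarith
  intro j
  induction j with
  | zero => rw [hθ0]; exact hinit
  | succ n ih =>
    have h1 : y (n+1) ≤ ytil (θ n) - g (ytil (θ n)) / 2 * Δθ n := by
      have h2 := hsmall n (y n) (ytil (θ n)) (hy0 n) ih
      have h3 := hstep n
      linarith
    have key : ytil (θ n) - g (ytil (θ n)) / 2 * Δθ n ≤ ytil (θ (n+1)) := by
      set c : ℝ := g (ytil (θ n)) / 2 with hc
      have hmono : MonotoneOn (fun s => ytil s + c * s) (Set.Icc (θ n) (θ (n+1))) := by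
        apply monotoneOn_of_deriv_nonneg (convex_Icc _ _)
        · intro s hs
          exact ((hode s (le_trans (hθge n) hs.1)).continuousAt.add
            (continuousAt_const.mul continuousAt_id)).continuousWithinAt
        · intro s hs
          rw [interior_Icc] at hs
          have hs0 : θ₀ ≤ s := le_trans (hθge n) hs.1.le
          exact ((hode s hs0).add ((hasDerivAt_id s).const_mul c)).differentiableAt.differentiableWithinAt
        · intro s hs
          rw [interior_Icc] at hs
          have hs0 : θ₀ ≤ s := le_trans (hθge n) hs.1.le
          have hd : HasDerivAt (fun s => ytil s + c * s) (-(1/2) * g (ytil s) + c * 1) s := by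
            exact (hode s hs0).add ((hasDerivAt_id s).const_mul c)
          rw [hd.deriv]
          have hle : ytil s ≤ ytil (θ n) := hanti (hθge n) hs0 hs.1.le
          have hgle : g (ytil s) ≤ g (ytil (θ n)) :=
            hgmono.monotoneOn (hytilnonneg s hs0) (hytilnonneg _ (hθge n)) hle
          rw [hc]
          linarith
      have hle : θ n ≤ θ (n+1) := by rw [hθ n]; linarith [(hΔθ n).le]
      have h4 := hmono (Set.left_mem_Icc.mpr hle) (Set.right_mem_Icc.mpr hle) hle
      simp only at h4
      rw [hθ n] at h4 ⊢
      have := mul_add c (θ n) (Δθ n)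
      linarith
    linarith
end

section
/- Let α₀, C₀, C'', C_W > 0 be given. There exist α ∈ (0, α₀) with C''α < 1/2, and C ≥ 2C₀e^{α₀C''}, such that for all r > 0 and all λ ∈ (0, 1/2): (1−λ)C e^{−α(r−C''λ)} + λC₀ e^{−α₀(r−C''λ)} ≤ C e^{−αr}. -/
open Real

/-- Tail-propagation inequality: given `α₀, C₀, C'' > 0`, there exist
`α ∈ (0, α₀)` with `C''α < 1/2` and `C ≥ 2C₀e^{α₀C''}` such that for all `r > 0`
and `λ ∈ (0, 1/2)`:
`(1−λ)C e^{−α(r−C''λ)} + λC₀ e^{−α₀(r−C''λ)} ≤ C e^{−αr}`. -/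
theorem stmt18 (α₀ C₀ C'' CW : ℝ)
    (hα₀ : 0 < α₀) (hC₀ : 0 < C₀) (hC'' : 0 < C'') (hCW : 0 < CW) :
    ∃ α : ℝ, 0 < α ∧ α < α₀ ∧ C'' * α < 1/2 ∧
    ∃ C : ℝ, 2 * C₀ * Real.exp (α₀ * C'') ≤ C ∧
      ∀ r > (0:ℝ), ∀ lam : ℝ, 0 < lam → lam < 1/2 →
        (1 - lam) * C * Real.exp (-α * (r - C'' * lam)) +
          lam * C₀ * Real.exp (-α₀ * (r - C'' * lam)) ≤ C * Real.exp (-α * r) := by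
  set α := min (α₀/2) (1/(4*C'')) with hαdef
  have hαpos : 0 < α := lt_min (by positivity) (by positivity)
  have hα1 : α < α₀ := lt_of_le_of_lt (min_le_left _ _) (by linarith)
  have hα2 : C'' * α ≤ 1/4 := by
    have h := min_le_right (α₀/2) (1/(4*C''))
    have : C'' * α ≤ C'' * (1/(4*C'')) := by
      exact mul_le_mul_of_nonneg_left h hC''.le
    calc C'' * α ≤ C'' * (1/(4*C'')) := this
      _ = 1/4 := by field_simp
  refine ⟨α, hαpos, hα1, by linarith, 2*C₀*Real.exp (α₀*C''), le_refl _, ?_⟩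
  intro r hr lam hl1 hl2
  set C : ℝ := 2*C₀*Real.exp (α₀*C'') with hCdef
  have hCpos : 0 < C := by positivity
  have e1 : Real.exp (-α * (r - C'' * lam)) =
      Real.exp (α * C'' * lam) * Real.exp (-α * r) := by
    rw [← Real.exp_add]; ring_nf
  have e2 : Real.exp (-α₀ * (r - C'' * lam)) =
      Real.exp (α₀ * C'' * lam) * Real.exp (-α₀ * r) := by
    rw [← Real.exp_add]; ring_nf
  rw [e1, e2]
  have hr1 : Real.exp (-α₀ * r) ≤ Real.exp (-α * r) := by
    apply Real.exp_le_exp.2; nlinarith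
  have hr2 : Real.exp (α₀ * C'' * lam) ≤ Real.exp (α₀ * C'') := by
    apply Real.exp_le_exp.2; nlinarith [mul_pos hα₀ hC'']
  -- key: (1-lam) * exp(α*C''*lam) ≤ 1 - lam/2
  have key : (1 - lam) * Real.exp (α * C'' * lam) ≤ 1 - lam/2 := by
    have h4 : Real.exp (α * C'' * lam) ≤ Real.exp (lam/4) := by
      apply Real.exp_le_exp.2; nlinarith
    have h5 : 1 - lam/4 ≤ Real.exp (-(lam/4)) := by
      have := Real.add_one_le_exp (-(lam/4)); linarith
    have h6 : Real.exp (lam/4) ≤ 1 / (1 - lam/4) := by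
      rw [le_div_iff₀ (by linarith)]
      have := mul_le_mul_of_nonneg_left h5 (Real.exp_pos (lam/4)).le
      calc Real.exp (lam/4) * (1 - lam/4) ≤ Real.exp (lam/4) * Real.exp (-(lam/4)) := this
        _ = 1 := by rw [← Real.exp_add]; simp
    have h7 : (1 - lam) * Real.exp (α * C'' * lam) ≤ (1 - lam) / (1 - lam/4) := by
      have := le_trans h4 h6
      have hnn : 0 ≤ 1 - lam := by linarith
      calc (1 - lam) * Real.exp (α * C'' * lam) ≤ (1 - lam) * (1/(1 - lam/4)) :=
            mul_le_mul_of_nonneg_left this hnn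
        _ = (1 - lam) / (1 - lam/4) := by ring
    have h8 : (1 - lam) / (1 - lam/4) ≤ 1 - lam/2 := by
      rw [div_le_iff₀ (by linarith)]; nlinarith
    linarith
  have hE : 0 < Real.exp (-α * r) := Real.exp_pos _
  have hE0 : 0 < Real.exp (α₀ * C'' * lam) := Real.exp_pos _
  have t1 : (1 - lam) * C * (Real.exp (α * C'' * lam) * Real.exp (-α * r)) ≤
      (1 - lam/2) * C * Real.exp (-α * r) := by
    have := mul_le_mul_of_nonneg_right key hE.le
    nlinarith [hCpos]
  have t2 : lam * C₀ * (Real.exp (α₀ * C'' * lam) * Real.exp (-α₀ * r)) ≤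
      (lam/2) * C * Real.exp (-α * r) := by
    have b1 : Real.exp (α₀ * C'' * lam) * Real.exp (-α₀ * r) ≤
        Real.exp (α₀ * C'') * Real.exp (-α * r) := by
      apply mul_le_mul hr2 hr1 (Real.exp_pos _).le (Real.exp_pos _).le
    have : lam * C₀ * (Real.exp (α₀ * C'' * lam) * Real.exp (-α₀ * r)) ≤
        lam * C₀ * (Real.exp (α₀ * C'') * Real.exp (-α * r)) := by
      apply mul_le_mul_of_nonneg_left b1; positivity
    calc lam * C₀ * (Real.exp (α₀ * C'' * lam) * Real.exp (-α₀ * r))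
        ≤ lam * C₀ * (Real.exp (α₀ * C'') * Real.exp (-α * r)) := this
      _ = (lam/2) * C * Real.exp (-α * r) := by rw [hCdef]; ring
  linarith
end
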